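/- Under the assumptions of the preceding eigendecomposition setting, the time-limited Gramian over [0, t_e] admits the factored form P_T = X_B (𝒞 − exp(Λ t_e) 𝒞 exp(Λ^H t_e)) X_B^H. -/

import Mathlib

/-!
With `A = X Λ X⁻¹` and `w = X⁻¹ B`, the diagonal factors commute, so
`exp (t A) B = X_B e(t)` for the column `e(t) = (exp (t λᵢ))ᵢ`. The integrand is therefore
`X_B (exp (t (λᵢ + conj λⱼ)))ᵢⱼ X_Bᴴ`, and integrating entrywise gives
`(exp (t_e μᵢⱼ) - 1) / μᵢⱼ` with `μᵢⱼ = λᵢ + conj λⱼ` (nonzero, as `Re μᵢⱼ < 0`), which is the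
`(i, j)` entry of `𝒞 - exp (Λ t_e) 𝒞 exp (Λᴴ t_e)`.
-/

open Matrix MeasureTheory NormedSpace
open scoped Matrix ComplexConjugate

attribute [local instance] Matrix.normedAddCommGroup Matrix.normedSpace

namespace Matrix

variable {ι : Type*}

theorem exp_smul_diagonal [Fintype ι] [DecidableEq ι] (c : ℂ) (v : ι → ℂ) :
    exp (c • diagonal v) = diagonal fun i => Complex.exp (c * v i) := by
  rw [← diagonal_smul, exp_diagonal, Pi.exp_def]
  simp only [Pi.smul_apply, smul_eq_mul, Complex.exp_eq_exp_ℂ]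

theorem exp_smul_conj_diagonal [Fintype ι] [DecidableEq ι] {X : Matrix ι ι ℂ} (hX : IsUnit X)
    (c : ℂ) (v : ι → ℂ) :
    exp (c • (X * diagonal v * X⁻¹)) = X * diagonal (fun i => Complex.exp (c * v i)) * X⁻¹ := by
  rw [← exp_smul_diagonal, ← exp_conj X _ hX, Matrix.mul_smul, Matrix.smul_mul]

theorem exp_ofReal_smul_conjTranspose [Fintype ι] [DecidableEq ι] (t : ℝ) (A : Matrix ι ι ℂ) :
    exp ((t : ℂ) • Aᴴ) = (exp ((t : ℂ) • A))ᴴ := by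
  rw [← exp_conjTranspose, conjTranspose_smul, Complex.star_def, Complex.conj_ofReal]

theorem diagonal_mul_col [Fintype ι] [DecidableEq ι] {α : Type*} [CommSemiring α] (d : ι → α)
    (v : Matrix ι (Fin 1) α) :
    diagonal d * v = diagonal (fun i => v i 0) * of fun i (_ : Fin 1) => d i := by
  ext i k
  rw [Subsingleton.elim k 0]
  simp [mul_comm]

theorem exp_smul_conj_diagonal_mul [Fintype ι] [DecidableEq ι] {X : Matrix ι ι ℂ}
    (hX : IsUnit X) (c : ℂ) (l : ι → ℂ) (B : Matrix ι (Fin 1) ℂ) :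
    exp (c • (X * diagonal l * X⁻¹)) * B
      = X * diagonal (fun i => (X⁻¹ * B) i 0) * of fun i (_ : Fin 1) => Complex.exp (c * l i) := by
  rw [exp_smul_conj_diagonal hX, Matrix.mul_assoc, Matrix.mul_assoc, diagonal_mul_col,
    Matrix.mul_assoc]

theorem col_exp_mul_conjTranspose (t : ℝ) (l : ι → ℂ) :
    (of fun i (_ : Fin 1) => Complex.exp (t * l i)) *
        (of fun i (_ : Fin 1) => Complex.exp (t * l i))ᴴ
      = of fun i j => Complex.exp (t * (l i + conj (l j))) := by
  ext i j
  simp only [mul_apply, conjTranspose_apply, of_apply, Fin.sum_univ_one, RCLike.star_def,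
    ← Complex.exp_conj, ← Complex.exp_add, _root_.map_mul, Complex.conj_ofReal, mul_add]

theorem exp_smul_conj_diagonal_mul_mul_conjTranspose [Fintype ι] [DecidableEq ι]
    {X : Matrix ι ι ℂ} (hX : IsUnit X) (l : ι → ℂ) (B : Matrix ι (Fin 1) ℂ) (t : ℝ) :
    exp ((t : ℂ) • (X * diagonal l * X⁻¹)) * B * Bᴴ * exp ((t : ℂ) • (X * diagonal l * X⁻¹)ᴴ)
      = X * diagonal (fun i => (X⁻¹ * B) i 0) *
          (of fun i j => Complex.exp (t * (l i + conj (l j)))) *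
          (X * diagonal (fun i => (X⁻¹ * B) i 0))ᴴ := by
  set A := X * diagonal l * X⁻¹
  calc exp ((t : ℂ) • A) * B * Bᴴ * exp ((t : ℂ) • Aᴴ)
      = (exp ((t : ℂ) • A) * B) * (exp ((t : ℂ) • A) * B)ᴴ := by
        rw [exp_ofReal_smul_conjTranspose, conjTranspose_mul, Matrix.mul_assoc _ Bᴴ]
    _ = _ := by
        rw [exp_smul_conj_diagonal_mul hX, conjTranspose_mul, ← col_exp_mul_conjTranspose]
        simp only [Matrix.mul_assoc]

noncomputable def cauchyMatrix (l : ι → ℂ) : Matrix ι ι ℂ :=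
  of fun i j => -(1 / (l i + conj (l j)))

theorem of_exp_sub_one_div_eq_cauchyMatrix_sub [Fintype ι] [DecidableEq ι] (l : ι → ℂ)
    (T : ℝ) :
    (of fun i j => (Complex.exp (T * (l i + conj (l j))) - 1) / (l i + conj (l j)))
      = cauchyMatrix l - exp ((T : ℂ) • diagonal l) * cauchyMatrix l *
          exp ((T : ℂ) • (diagonal l)ᴴ) := by
  rw [diagonal_conjTranspose, exp_smul_diagonal, exp_smul_diagonal]
  ext i j
  simp only [cauchyMatrix, sub_apply, of_apply, diagonal_mul, mul_diagonal, Pi.star_apply,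
    RCLike.star_def, mul_add, Complex.exp_add]
  ring

variable {a b : ℝ}

theorem intervalIntegral_apply [Fintype ι] {κ 𝕜 : Type*} [Fintype κ] [RCLike 𝕜]
    {f : ℝ → Matrix ι κ 𝕜} (hf : Continuous f) (i : ι) (j : κ) :
    (∫ t in a..b, f t) i j = ∫ t in a..b, f t i j :=
  let entry : Matrix ι κ 𝕜 →L[ℝ] 𝕜 := LinearMap.toContinuousLinearMap (entryLinearMap ℝ 𝕜 i j)
  (entry.intervalIntegral_comp_comm (hf.intervalIntegrable a b)).symm

theorem intervalIntegral_mul_mul [Fintype ι] {𝕜 : Type*} [RCLike 𝕜] (P Q : Matrix ι ι 𝕜)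
    {f : ℝ → Matrix ι ι 𝕜} (hf : Continuous f) :
    ∫ t in a..b, P * f t * Q = P * (∫ t in a..b, f t) * Q :=
  (LinearMap.toContinuousLinearMap ((LinearMap.mulRight ℝ Q).comp (LinearMap.mulLeft ℝ P))
    ).intervalIntegral_comp_comm (hf.intervalIntegrable a b)

theorem intervalIntegral_of_cexp_mul [Fintype ι] {κ : Type*} [Fintype κ] {μ : ι → κ → ℂ}
    (hμ : ∀ i j, μ i j ≠ 0) :
    ∫ t in a..b, of (fun i j => Complex.exp (t * μ i j))
      = of fun i j => (Complex.exp (b * μ i j) - Complex.exp (a * μ i j)) / μ i j := by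
  ext i j
  rw [intervalIntegral_apply (continuous_matrix fun i j => by fun_prop)]
  simp only [of_apply, mul_comm _ (μ i j)]
  exact integral_exp_mul_complex (hμ i j)

end Matrix

theorem time_limited_gramian_cauchy_factorization_general {n : ℕ}
    (A X : Matrix (Fin n) (Fin n) ℂ) (l : Fin n → ℂ)
    (B : Matrix (Fin n) (Fin 1) ℂ) (te : ℝ)
    (hX : IsUnit X) (hdiag : A = X * Matrix.diagonal l * X⁻¹)
    (hHurwitz : ∀ i, (l i).re < 0) :
    (∫ t in (0:ℝ)..te, exp ((t:ℂ) • A) * B * Bᴴ * exp ((t:ℂ) • Aᴴ))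
      = (X * Matrix.diagonal (fun i => (X⁻¹ * B) i 0)) *
          ((Matrix.of fun i j => -(1 / (l i + conj (l j))))
            - exp ((te:ℂ) • Matrix.diagonal l) *
                (Matrix.of fun i j => -(1 / (l i + conj (l j)))) *
                exp ((te:ℂ) • (Matrix.diagonal l)ᴴ)) *
          (X * Matrix.diagonal (fun i => (X⁻¹ * B) i 0))ᴴ := by
  subst hdiag
  have hμ : ∀ i j, l i + conj (l j) ≠ 0 := fun i j h => by
    have := congrArg Complex.re h
    simp only [Complex.add_re, Complex.conj_re, Complex.zero_re] at this
    linarith [hHurwitz i, hHurwitz j]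
  simp_rw [exp_smul_conj_diagonal_mul_mul_conjTranspose hX]
  rw [intervalIntegral_mul_mul _ _ (continuous_matrix fun i j => by fun_prop),
    intervalIntegral_of_cexp_mul hμ]
  simp only [Complex.ofReal_zero, zero_mul, Complex.exp_zero]
  exact congrArg (_ * · * _) (of_exp_sub_one_div_eq_cauchyMatrix_sub l te)

theorem time_limited_gramian_cauchy_factorization {n : ℕ}
    (A X : Matrix (Fin n) (Fin n) ℂ) (l : Fin n → ℂ)
    (B : Matrix (Fin n) (Fin 1) ℂ) (te : ℝ) (hte : 0 < te)
    (hX : IsUnit X) (hdiag : A = X * Matrix.diagonal l * X⁻¹)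
    (hHurwitz : ∀ i, (l i).re < 0) :
    (∫ t in (0:ℝ)..te, exp ((t:ℂ) • A) * B * Bᴴ * exp ((t:ℂ) • Aᴴ))
      = (X * Matrix.diagonal (fun i => (X⁻¹ * B) i 0)) *
          ((Matrix.of fun i j => -(1 / (l i + conj (l j))))
            - exp ((te:ℂ) • Matrix.diagonal l) *
                (Matrix.of fun i j => -(1 / (l i + conj (l j)))) *
                exp ((te:ℂ) • (Matrix.diagonal l)ᴴ)) *
          (X * Matrix.diagonal (fun i => (X⁻¹ * B) i 0))ᴴ :=
  time_limited_gramian_cauchy_factorization_general A X l B te hX hdiag hHurwitz
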